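/- arXiv:1301.0386 — 2 statements merged into one kernel-verified Lean document; each statement's English description precedes it below -/
import Mathlib

section
/- Let φ be a continuous flow on a topological space X and define the relation R = {(x, y) ∈ X × X : y ∈ closure of the orbit of x}. If R is closed in X × X, then R is symmetric: y ∈ closure(O(x)) implies x ∈ closure(O(y)). -/
/-!
Fix `x`. Since `R` is closed, so is its slice `{z | x ∈ closure (O z)}`. This slice contains the
orbit of `x`, because `x = φ (-t) (φ t x)` lies in the orbit of each of its points `φ t x`. Being
closed, it contains the closure of that orbit as well.
-/

section FlowOrbit

variable {X : Type*} (φ : ℝ → X → X)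

def flowOrbit (x : X) : Set X := {z | ∃ t : ℝ, φ t x = z}

variable {φ}

theorem mem_flowOrbit_of_mem_flowOrbit (h0 : ∀ x, φ 0 x = x)
    (hadd : ∀ s t x, φ (s + t) x = φ s (φ t x)) {x y : X} (hy : y ∈ flowOrbit φ x) :
    x ∈ flowOrbit φ y := by
  obtain ⟨t, rfl⟩ := hy
  exact ⟨-t, by rw [← hadd, neg_add_cancel, h0]⟩

theorem isClosed_setOf_mem_closure_flowOrbit [TopologicalSpace X]
    (hR : IsClosed {p : X × X | p.2 ∈ closure (flowOrbit φ p.1)}) (x : X) :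
    IsClosed {z : X | x ∈ closure (flowOrbit φ z)} :=
  hR.preimage (continuous_id.prodMk continuous_const)

end FlowOrbit

theorem Rclosed_symmetric_general {X : Type*} [TopologicalSpace X]
    (φ : ℝ → X → X)
    (h0 : ∀ x, φ 0 x = x)
    (hadd : ∀ s t x, φ (s + t) x = φ s (φ t x))
    (hR : IsClosed {p : X × X | p.2 ∈ closure {y : X | ∃ t : ℝ, φ t p.1 = y}}) :
    ∀ x y : X, y ∈ closure {z : X | ∃ t : ℝ, φ t x = z} →
      x ∈ closure {z : X | ∃ t : ℝ, φ t y = z} := by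
  intro x y hy
  have horbit : flowOrbit φ x ⊆ {z : X | x ∈ closure (flowOrbit φ z)} := fun z hz =>
    subset_closure (mem_flowOrbit_of_mem_flowOrbit h0 hadd hz)
  exact closure_minimal horbit (isClosed_setOf_mem_closure_flowOrbit hR x) hy

/-- If the orbit-closure relation is closed, it is symmetric. -/
theorem Rclosed_symmetric {X : Type*} [TopologicalSpace X]
    (φ : ℝ → X → X)
    (h0 : ∀ x, φ 0 x = x)
    (hadd : ∀ s t x, φ (s + t) x = φ s (φ t x))
    (hcont : Continuous fun p : ℝ × X => φ p.1 p.2)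
    (hR : IsClosed {p : X × X | p.2 ∈ closure {y : X | ∃ t : ℝ, φ t p.1 = y}}) :
    ∀ x y : X, y ∈ closure {z : X | ∃ t : ℝ, φ t x = z} →
      x ∈ closure {z : X | ∃ t : ℝ, φ t y = z} :=
  Rclosed_symmetric_general φ h0 hadd hR
end

section
/- Let φ be a continuous flow on a topological space X and define R = {(x, y) : y ∈ closure(O(x))}, where O(x) is the orbit of x. If R is closed in X × X, then the orbit closures form a partition of X: for any x, y ∈ X, if closure(O(x)) ∩ closure(O(y)) ≠ ∅ then closure(O(x)) = closure(O(y)). -/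
/-- If the orbit-closure relation is closed, orbit closures form a partition. -/
theorem Rclosed_implies_pap {X : Type*} [TopologicalSpace X]
    (φ : ℝ → X → X)
    (h0 : ∀ x, φ 0 x = x)
    (hadd : ∀ s t x, φ (s + t) x = φ s (φ t x))
    (hcont : Continuous fun p : ℝ × X => φ p.1 p.2)
    (hR : IsClosed {p : X × X | p.2 ∈ closure {y : X | ∃ t : ℝ, φ t p.1 = y}}) :
    ∀ x y : X,
      (closure {z : X | ∃ t : ℝ, φ t x = z} ∩ closure {z : X | ∃ t : ℝ, φ t y = z}).Nonempty →
      closure {z : X | ∃ t : ℝ, φ t x = z} = closure {z : X | ∃ t : ℝ, φ t y = z} := by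
  set O : X → Set X := fun x => {z : X | ∃ t : ℝ, φ t x = z} with hO
  have hct : ∀ t : ℝ, Continuous (φ t) := fun t =>
    hcont.comp (continuous_const.prodMk continuous_id)
  -- invariance of orbit closures
  have hinv : ∀ (t : ℝ) (x z : X), z ∈ closure (O x) → φ t z ∈ closure (O x) := by
    intro t x z hz
    have h1 : φ t '' closure (O x) ⊆ closure (φ t '' O x) :=
      (hct t) |> image_closure_subset_closure_image
    have h2 : φ t '' O x ⊆ O x := by
      rintro _ ⟨w, ⟨s, rfl⟩, rfl⟩
      exact ⟨t + s, hadd t s x⟩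
    exact closure_mono h2 (h1 ⟨z, hz, rfl⟩)
  -- transitivity
  have htrans : ∀ x z : X, z ∈ closure (O x) → closure (O z) ⊆ closure (O x) := by
    intro x z hz
    have : O z ⊆ closure (O x) := by
      rintro _ ⟨t, rfl⟩
      exact hinv t x z hz
    simpa using closure_minimal this isClosed_closure
  -- symmetry, using closedness of R
  have hsym : ∀ x z : X, z ∈ closure (O x) → x ∈ closure (O z) := by
    intro x z hz
    have hC : IsClosed {w : X | x ∈ closure (O w)} := by
      have := hR.preimage (continuous_id.prodMk (continuous_const (y := x)))
      simpa using this
    have hsub : O x ⊆ {w : X | x ∈ closure (O w)} := by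
      rintro _ ⟨t, rfl⟩
      apply subset_closure
      exact ⟨-t, by rw [← hadd, neg_add_cancel, h0]⟩
    exact closure_minimal hsub hC hz
  intro x y ⟨w, hwx, hwy⟩
  have hx : x ∈ closure (O w) := hsym x w hwx
  have hy : y ∈ closure (O w) := hsym y w hwy
  apply subset_antisymm
  · exact (htrans w x hx).trans (htrans y w hwy)
  · exact (htrans w y hy).trans (htrans x w hwx)
end
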